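/- arXiv:1410.0862 — 3 statements merged into one kernel-verified Lean document; each statement's English description precedes it below -/
import Mathlib

section
/- Let B be a real 3×3 matrix, h ∈ ℝ, and suppose m₀, m₁ ∈ ℝ³ satisfy the implicit midpoint relation m₁ = m₀ + h · (μ × (B μ)) where μ = (m₀ + m₁)/2. Then ‖m₁‖ = ‖m₀‖. -/
open Matrix

/-- The cross product on `ℝ³` viewed as `EuclideanSpace ℝ (Fin 3)`. -/
noncomputable def cross3 (u v : EuclideanSpace ℝ (Fin 3)) : EuclideanSpace ℝ (Fin 3) :=
  WithLp.toLp 2 (crossProduct (u : Fin 3 → ℝ) (v : Fin 3 → ℝ))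

/-- The matrix-vector product of a `3 × 3` real matrix with a vector of
`EuclideanSpace ℝ (Fin 3)`. -/
noncomputable def matVec3 (A : Matrix (Fin 3) (Fin 3) ℝ) (v : EuclideanSpace ℝ (Fin 3)) :
    EuclideanSpace ℝ (Fin 3) :=
  WithLp.toLp 2 (A *ᵥ (v : Fin 3 → ℝ))

/-! If `f x ⟂ x` for every `x`, the midpoint-rule increment `m₁ - m₀ = h f(μ)` is orthogonal to
`m₀ + m₁ = 2μ`, and `⟪m₁ + m₀, m₁ - m₀⟫ = ‖m₁‖² - ‖m₀‖²`. The cross product `μ × Bμ` is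
orthogonal to `μ`. -/

theorem inner_cross3_self_left (u v : EuclideanSpace ℝ (Fin 3)) : inner ℝ u (cross3 u v) = 0 := by
  rw [EuclideanSpace.inner_eq_star_dotProduct, star_trivial, dotProduct_comm]
  exact dot_self_cross _ _

theorem norm_eq_of_implicit_midpoint_step {F : Type*} [NormedAddCommGroup F]
    [InnerProductSpace ℝ F] {f : F → F} (hf : ∀ x, inner ℝ x (f x) = 0) {h : ℝ} {m₀ m₁ : F}
    (hstep : m₁ = m₀ + h • f (((1 : ℝ) / 2) • (m₀ + m₁))) : ‖m₁‖ = ‖m₀‖ := by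
  set μ := ((1 : ℝ) / 2) • (m₀ + m₁)
  have hsum : m₁ + m₀ = (2 : ℝ) • μ := by
    rw [smul_smul, add_comm]; norm_num
  have hdiff : m₁ - m₀ = h • f μ := by
    rw [sub_eq_iff_eq_add', ← hstep]
  rw [← real_inner_add_sub_eq_zero_iff, hsum, hdiff, real_inner_smul_left,
    real_inner_smul_right, hf, mul_zero, mul_zero]

theorem implicit_midpoint_preserves_norm
    (B : Matrix (Fin 3) (Fin 3) ℝ) (h : ℝ)
    (m₀ m₁ : EuclideanSpace ℝ (Fin 3))
    (hmid : m₁ = m₀ + h • cross3 (((1 : ℝ) / 2) • (m₀ + m₁)) (matVec3 B (((1 : ℝ) / 2) • (m₀ + m₁)))) :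
    ‖m₁‖ = ‖m₀‖ :=
  norm_eq_of_implicit_midpoint_step (f := fun x => cross3 x (matVec3 B x))
    (fun x => inner_cross3_self_left x _) hmid
end

section
/- Let B be a symmetric real 3×3 matrix, h ∈ ℝ, and suppose m₀, m₁ ∈ ℝ³ satisfy the implicit midpoint relation m₁ = m₀ + h · (μ × (B μ)) where μ = (m₀ + m₁)/2. Then ⟪m₁, B m₁⟫ = ⟪m₀, B m₀⟫, i.e., the implicit midpoint rule exactly preserves the energy ½ mᵀ B m. -/
open Matrix

/-!
The implicit midpoint rule preserves every quadratic first integral `⟪x, T x⟫` of `ẋ = f x`: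
by symmetry of `T` the energy increment is `⟪m₁ - m₀, T (m₀ + m₁)⟫ = 2 h ⟪f μ, T μ⟫` with `μ` the
midpoint, and this vanishes because the energy is conserved by the flow. For the rigid body,
`⟪μ × Bμ, Bμ⟫ = 0` since a cross product is orthogonal to its factors.
-/

open scoped RealInnerProductSpace

section QuadraticInvariant

variable {E : Type*} [NormedAddCommGroup E] [InnerProductSpace ℝ E] {T : E →ₗ[ℝ] E}

theorem LinearMap.IsSymmetric.inner_map_self_sub_inner_map_self (hT : T.IsSymmetric) (x y : E) :
    ⟪x, T x⟫ - ⟪y, T y⟫ = ⟪x - y, T (x + y)⟫ := by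
  have hxy : ⟪x, T y⟫ = ⟪y, T x⟫ := by rw [← hT, real_inner_comm]
  rw [map_add, inner_sub_left, inner_add_right, inner_add_right, hxy]
  ring

theorem LinearMap.IsSymmetric.inner_map_self_eq_of_implicit_midpoint (hT : T.IsSymmetric)
    {f : E → E} (hf : ∀ x, ⟪f x, T x⟫ = 0) {h : ℝ} {m₀ m₁ : E}
    (hmid : m₁ = m₀ + h • f (((1 : ℝ) / 2) • (m₀ + m₁))) :
    ⟪m₁, T m₁⟫ = ⟪m₀, T m₀⟫ := by
  set μ := ((1 : ℝ) / 2) • (m₀ + m₁)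
  have hstep : m₁ - m₀ = h • f μ := by rw [hmid, add_sub_cancel_left]
  have hsum : m₁ + m₀ = (2 : ℝ) • μ := by
    rw [smul_smul, add_comm m₁]; norm_num
  rw [← sub_eq_zero, hT.inner_map_self_sub_inner_map_self, hstep, hsum, map_smul,
    real_inner_smul_left, real_inner_smul_right, hf, mul_zero, mul_zero]

end QuadraticInvariant

theorem matVec3_eq_toEuclideanLin (A : Matrix (Fin 3) (Fin 3) ℝ) :
    matVec3 A = Matrix.toEuclideanLin A := rfl

theorem inner_cross3_self_right (u v : EuclideanSpace ℝ (Fin 3)) : ⟪cross3 u v, v⟫ = 0 := by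
  rw [EuclideanSpace.inner_eq_star_dotProduct, star_trivial]
  exact dot_cross_self (u : Fin 3 → ℝ) v

theorem implicit_midpoint_preserves_energy
    (B : Matrix (Fin 3) (Fin 3) ℝ) (hB : B.IsSymm) (h : ℝ)
    (m₀ m₁ : EuclideanSpace ℝ (Fin 3))
    (hmid : m₁ = m₀ + h • cross3 (((1 : ℝ) / 2) • (m₀ + m₁)) (matVec3 B (((1 : ℝ) / 2) • (m₀ + m₁)))) :
    (inner ℝ m₁ (matVec3 B m₁) : ℝ) = inner ℝ m₀ (matVec3 B m₀) := by
  have hT : (Matrix.toEuclideanLin B).IsSymmetric := Matrix.isSymmetric_toEuclideanLin_iff.mpr hB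
  rw [matVec3_eq_toEuclideanLin] at hmid ⊢
  exact hT.inner_map_self_eq_of_implicit_midpoint (fun x => inner_cross3_self_right x _) hmid
end

section
/- Let n ≥ 1, h > 0, a ∈ ℝ, and let W₁, …, Wₙ be independent real random variables each Gaussian with mean 0 and variance h. Let φ : ℝ³ → ℝ³ be any map satisfying ‖φ(x)‖ = ‖x‖ for all x, and define the splitting iterates by m_{j+1} = exp(a W_{j+1} − ½ a² h) · φ(m_j) starting from a fixed m₀ ∈ ℝ³. Then 𝔼[‖m_n‖] = ‖m₀‖. -/
open MeasureTheory ProbabilityTheory Real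

/-! Because `φ` preserves norms, the scheme is deterministic in norm:
`‖m n‖ = ‖m₀‖ * exp (a * ∑ W j - n * a ^ 2 * h / 2)`. By independence, the expectation of
`exp (a * ∑ W j)` is the product of the Gaussian moment generating functions,
`exp (n * a ^ 2 * h / 2)`, which exactly cancels the Itô correction. -/

theorem norm_eq_prod_norm_mul_of_norm_preserving {𝕜 E : Type*} [NormedField 𝕜]
    [NormedAddCommGroup E] [NormedSpace 𝕜 E] {φ : E → E} (hφ : ∀ x, ‖φ x‖ = ‖x‖) :
    ∀ {n : ℕ} (c : Fin n → 𝕜) (m : ℕ → E), (∀ j : Fin n, m (j + 1) = c j • φ (m j)) →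
      ‖m n‖ = (∏ j, ‖c j‖) * ‖m 0‖
  | 0, _, _, _ => by simp
  | n + 1, c, m, hrec => by
    have ih := norm_eq_prod_norm_mul_of_norm_preserving hφ (fun j : Fin n ↦ c j.castSucc) m
      fun j ↦ hrec j.castSucc
    have hlast : m (n + 1) = c (Fin.last n) • φ (m n) := hrec (Fin.last n)
    rw [hlast, norm_smul, hφ, ih, Fin.prod_univ_castSucc]
    ring

theorem ProbabilityTheory.iIndepFun.mgf_sum_of_map_eq_gaussianReal {Ω ι : Type*}
    {mΩ : MeasurableSpace Ω} {P : Measure Ω} {X : ι → Ω → ℝ} {μ : ι → ℝ} {v : ι → NNReal}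
    (hindep : iIndepFun X P)
    (hlaw : ∀ i, P.map (X i) = gaussianReal (μ i) (v i)) (s : Finset ι) (t : ℝ) :
    mgf (∑ i ∈ s, X i) P t = exp ((∑ i ∈ s, μ i) * t + (∑ i ∈ s, (v i : ℝ)) * t ^ 2 / 2) := by
  have hmeas i : AEMeasurable (X i) P :=
    aemeasurable_of_map_neZero (by rw [hlaw i]; infer_instance)
  rw [hindep.mgf_sum₀ hmeas, Finset.sum_mul, Finset.sum_mul, Finset.sum_div,
    ← Finset.sum_add_distrib, exp_sum]
  exact Finset.prod_congr rfl fun i _ ↦ mgf_gaussianReal (hlaw i) t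

theorem splitting_preserves_norm_in_expectation_general
    {Ω : Type*} [MeasureSpace Ω] [IsProbabilityMeasure (ℙ : Measure Ω)]
    (n : ℕ) (h a : ℝ) (hh : 0 < h)
    (W : Fin n → Ω → ℝ)
    (hWindep : iIndepFun W ℙ)
    (hWlaw : ∀ j, Measure.map (W j) ℙ = gaussianReal 0 h.toNNReal)
    (φ : EuclideanSpace ℝ (Fin 3) → EuclideanSpace ℝ (Fin 3))
    (hφ : ∀ x, ‖φ x‖ = ‖x‖)
    (m₀ : EuclideanSpace ℝ (Fin 3))
    (m : ℕ → Ω → EuclideanSpace ℝ (Fin 3))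
    (hm0 : ∀ ω, m 0 ω = m₀)
    (hrec : ∀ j : Fin n, ∀ ω,
      m (j + 1) ω = Real.exp (a * W j ω - a ^ 2 * h / 2) • φ (m j ω)) :
    (∫ ω, ‖m n ω‖ ∂ℙ) = ‖m₀‖ := by
  have hnorm ω : ‖m n ω‖ = ‖m₀‖ * exp (-(n * (a ^ 2 * h / 2))) * exp (a * (∑ j, W j) ω) := by
    rw [norm_eq_prod_norm_mul_of_norm_preserving hφ _ (m · ω) (hrec · ω), hm0]
    simp only [norm_of_nonneg (exp_pos _).le, ← exp_sum, Finset.sum_sub_distrib,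
      ← Finset.mul_sum, Finset.sum_const, Finset.card_univ, Fintype.card_fin, nsmul_eq_mul,
      Finset.sum_apply]
    rw [mul_assoc, ← exp_add]
    ring_nf
  have hmgf : mgf (∑ j, W j) ℙ a = exp (n * (a ^ 2 * h / 2)) := by
    rw [hWindep.mgf_sum_of_map_eq_gaussianReal hWlaw, coe_toNNReal h hh.le]
    simp only [Finset.sum_const, Finset.card_univ, Fintype.card_fin, nsmul_eq_mul]
    ring_nf
  simp_rw [hnorm]
  rw [integral_const_mul, ← mgf, hmgf, mul_assoc, ← exp_add, neg_add_cancel, exp_zero, mul_one]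

theorem splitting_preserves_norm_in_expectation
    {Ω : Type*} [MeasureSpace Ω] [IsProbabilityMeasure (ℙ : Measure Ω)]
    (n : ℕ) (hn : 1 ≤ n) (h a : ℝ) (hh : 0 < h)
    (W : Fin n → Ω → ℝ) (hWmeas : ∀ j, Measurable (W j))
    (hWindep : iIndepFun W ℙ)
    (hWlaw : ∀ j, Measure.map (W j) ℙ = gaussianReal 0 h.toNNReal)
    (φ : EuclideanSpace ℝ (Fin 3) → EuclideanSpace ℝ (Fin 3))
    (hφ : ∀ x, ‖φ x‖ = ‖x‖)
    (m₀ : EuclideanSpace ℝ (Fin 3))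
    (m : ℕ → Ω → EuclideanSpace ℝ (Fin 3))
    (hm0 : ∀ ω, m 0 ω = m₀)
    (hrec : ∀ j : Fin n, ∀ ω,
      m (j + 1) ω = Real.exp (a * W j ω - a ^ 2 * h / 2) • φ (m j ω)) :
    (∫ ω, ‖m n ω‖ ∂ℙ) = ‖m₀‖ :=
  splitting_preserves_norm_in_expectation_general n h a hh W hWindep hWlaw φ hφ m₀ m hm0 hrec
end
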